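/- Let 𝒞 ⊂ ℝ^m be countable, δ-separated for some δ > 0 (i.e., ‖c − c̃‖ ≥ δ for all distinct c, c̃ ∈ 𝒞), and let π be a probability mass function on 𝒞 with H_{1/2} := 2 log Σ_{c∈𝒞} √(π(c)) < ∞. Let σ > 0, let φ be the density of N(0, σ²I_m), and for x ∈ ℝ^m define p_X(x) = Σ_u π(u)φ(x−u) and the posterior q_x(c) = π(c)φ(x−c)/p_X(x). Then ∫_{ℝ^m} p_X(x) · ( −Σ_{c∈𝒞} q_x(c) log q_x(c) ) dx ≤ 2 exp( H_{1/2} − δ²/(8σ²) ). -/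

import Mathlib

open MeasureTheory

/-!
With `wᵢ(x) = πᵢ φ(x - cᵢ)` and `S = ∑ wᵢ`, the integrand is `∑ᵢ -wᵢ log (wᵢ / S)`. The inequality
`log y ≤ 2 (√y - 1)` bounds each term by `2 (√wᵢ √S - wᵢ)`, and `√S ≤ ∑ √wᵢ` turns the sum into
`2 ∑_{i ≠ j} √wᵢ √wⱼ`. The geometric mean of two Gaussian densities is, by Apollonius' theorem, a
Gaussian density centred at the midpoint times `exp (-‖cᵢ - cⱼ‖² / (8σ²))`, so each off-diagonal
term integrates to at most `√πᵢ √πⱼ exp (-δ² / (8σ²))`, and the sum over pairs to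
`(∑ √πᵢ)² exp (-δ² / (8σ²)) = exp (H_{1/2} - δ² / (8σ²))`.
-/

/-- The density of the Gaussian distribution `N(0, σ² I_m)` on `ℝ^m`
(with `t = σ²` the variance). -/
noncomputable def gaussDensity (m : ℕ) (t : ℝ) (u : EuclideanSpace ℝ (Fin m)) : ℝ :=
  (2 * Real.pi * t) ^ (-(m : ℝ) / 2) * Real.exp (-‖u‖ ^ 2 / (2 * t))

section GaussDensity

variable {m : ℕ} {t : ℝ}

lemma gaussDensity_nonneg (ht : 0 ≤ t) (u : EuclideanSpace ℝ (Fin m)) :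
    0 ≤ gaussDensity m t u := by
  unfold gaussDensity
  have := Real.pi_pos
  positivity

lemma gaussDensity_le (ht : 0 ≤ t) (u : EuclideanSpace ℝ (Fin m)) :
    gaussDensity m t u ≤ (2 * Real.pi * t) ^ (-(m : ℝ) / 2) := by
  unfold gaussDensity
  have := Real.pi_pos
  refine mul_le_of_le_one_right (by positivity) (Real.exp_le_one_iff.2 ?_)
  exact div_nonpos_of_nonpos_of_nonneg (by simp) (by positivity)

lemma integral_gaussDensity (ht : 0 < t) : ∫ u, gaussDensity m t u = 1 := by
  have h2πt : 0 < 2 * Real.pi * t := by have := Real.pi_pos; positivity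
  have hexp : ∀ u : EuclideanSpace ℝ (Fin m),
      gaussDensity m t u = (2 * Real.pi * t) ^ (-(m : ℝ) / 2) * Real.exp (-(2 * t)⁻¹ * ‖u‖ ^ 2) :=
    fun u => by rw [gaussDensity]; ring_nf
  simp_rw [hexp]
  rw [integral_const_mul, GaussianFourier.integral_rexp_neg_mul_sq_norm (by positivity),
    finrank_euclideanSpace_fin, div_inv_eq_mul, neg_div, Real.rpow_neg h2πt.le,
    show Real.pi * (2 * t) = 2 * Real.pi * t by ring, inv_mul_cancel₀ (by positivity)]

lemma integrable_gaussDensity (ht : 0 < t) : Integrable (gaussDensity m t) :=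
  .of_integral_ne_zero (by simp [integral_gaussDensity ht])

lemma sqrt_gaussDensity_sub_mul_sqrt_gaussDensity_sub (ht : 0 ≤ t)
    (x a b : EuclideanSpace ℝ (Fin m)) :
    √(gaussDensity m t (x - a)) * √(gaussDensity m t (x - b)) =
      Real.exp (-‖a - b‖ ^ 2 / (8 * t)) * gaussDensity m t (x - midpoint ℝ a b) := by
  have hApollonius :=
    EuclideanGeometry.dist_sq_add_dist_sq_eq_two_mul_dist_midpoint_sq_add_half_dist_sq x a b
  simp only [dist_eq_norm] at hApollonius
  have hexp : -‖x - a‖ ^ 2 / (2 * t) + -‖x - b‖ ^ 2 / (2 * t) =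
      2 * (-‖a - b‖ ^ 2 / (8 * t)) + 2 * (-‖x - midpoint ℝ a b‖ ^ 2 / (2 * t)) := by
    linear_combination (-1 / (2 * t)) * hApollonius
  rw [← Real.sqrt_mul (gaussDensity_nonneg ht _),
    ← Real.sqrt_sq (mul_nonneg (Real.exp_nonneg _) (gaussDensity_nonneg ht _))]
  congr 1
  simp only [gaussDensity, mul_pow, ← Real.exp_nat_mul, Nat.cast_ofNat]
  rw [mul_mul_mul_comm, ← Real.exp_add, hexp, Real.exp_add]
  ring

lemma sqrt_mul_gaussDensity_sub_mul_sqrt_mul_gaussDensity_sub {p q : ℝ} (hp : 0 ≤ p)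
    (hq : 0 ≤ q) (ht : 0 ≤ t) (x a b : EuclideanSpace ℝ (Fin m)) :
    √(p * gaussDensity m t (x - a)) * √(q * gaussDensity m t (x - b)) =
      √p * √q * Real.exp (-‖a - b‖ ^ 2 / (8 * t)) * gaussDensity m t (x - midpoint ℝ a b) := by
  rw [Real.sqrt_mul hp, Real.sqrt_mul hq, mul_mul_mul_comm,
    sqrt_gaussDensity_sub_mul_sqrt_gaussDensity_sub ht]
  ring

lemma integrable_sqrt_mul_gaussDensity_sub_mul {p q : ℝ} (hp : 0 ≤ p) (hq : 0 ≤ q) (ht : 0 < t)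
    (a b : EuclideanSpace ℝ (Fin m)) :
    Integrable fun x => √(p * gaussDensity m t (x - a)) * √(q * gaussDensity m t (x - b)) := by
  simp_rw [sqrt_mul_gaussDensity_sub_mul_sqrt_mul_gaussDensity_sub hp hq ht.le]
  exact ((integrable_gaussDensity ht).comp_sub_right _).const_mul _

lemma integral_sqrt_mul_gaussDensity_sub_mul {p q : ℝ} (hp : 0 ≤ p) (hq : 0 ≤ q) (ht : 0 < t)
    (a b : EuclideanSpace ℝ (Fin m)) :
    ∫ x, √(p * gaussDensity m t (x - a)) * √(q * gaussDensity m t (x - b)) =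
      √p * √q * Real.exp (-‖a - b‖ ^ 2 / (8 * t)) := by
  simp_rw [sqrt_mul_gaussDensity_sub_mul_sqrt_mul_gaussDensity_sub hp hq ht.le]
  rw [integral_const_mul, integral_sub_right_eq_self (gaussDensity m t), integral_gaussDensity ht,
    mul_one]

lemma summable_sqrt_mul_gaussDensity_sub {ι : Type*} {π : ι → ℝ} (hπ0 : ∀ i, 0 ≤ π i)
    (hπ : Summable fun i => √(π i)) (ht : 0 ≤ t) (c : ι → EuclideanSpace ℝ (Fin m))
    (x : EuclideanSpace ℝ (Fin m)) :
    Summable fun i => √(π i * gaussDensity m t (x - c i)) := by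
  refine .of_nonneg_of_le (fun _ => Real.sqrt_nonneg _) (fun i => ?_) (hπ.mul_right
    √((2 * Real.pi * t) ^ (-(m : ℝ) / 2)))
  rw [Real.sqrt_mul (hπ0 i)]
  exact mul_le_mul_of_nonneg_left (Real.sqrt_le_sqrt (gaussDensity_le ht _)) (Real.sqrt_nonneg _)

end GaussDensity

section Discrete

variable {ι : Type*}

lemma sq_le_mul_tsum {b : ι → ℝ} (hb0 : ∀ i, 0 ≤ b i) (hb : Summable b) (i : ι) :
    b i ^ 2 ≤ b i * ∑' j, b j := by
  rw [sq]
  exact mul_le_mul_of_nonneg_left (hb.le_tsum i fun j _ => hb0 j) (hb0 i)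

lemma Summable.sq_of_nonneg {b : ι → ℝ} (hb0 : ∀ i, 0 ≤ b i) (hb : Summable b) :
    Summable fun i => b i ^ 2 :=
  .of_nonneg_of_le (fun _ => sq_nonneg _) (sq_le_mul_tsum hb0 hb) (hb.mul_right _)

lemma Summable.of_sqrt {a : ι → ℝ} (ha0 : ∀ i, 0 ≤ a i) (ha : Summable fun i => √(a i)) :
    Summable a := by
  simpa only [Real.sq_sqrt (ha0 _)] using ha.sq_of_nonneg fun i => Real.sqrt_nonneg _

lemma tsum_sq_le_sq_tsum {b : ι → ℝ} (hb0 : ∀ i, 0 ≤ b i) (hb : Summable b) :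
    ∑' i, b i ^ 2 ≤ (∑' i, b i) ^ 2 := by
  rw [sq (∑' i, b i), ← tsum_mul_right]
  exact (hb.sq_of_nonneg hb0).tsum_le_tsum (sq_le_mul_tsum hb0 hb) (hb.mul_right _)

lemma tsum_prod_mul_eq_sq {b : ι → ℝ} (hb0 : ∀ i, 0 ≤ b i) (hb : Summable b) :
    ∑' p : ι × ι, b p.1 * b p.2 = (∑' i, b i) ^ 2 := by
  rw [sq, hb.tsum_mul_tsum hb (hb.mul_of_nonneg hb hb0 hb0)]

lemma summable_offDiag_mul [DecidableEq ι] {b : ι → ℝ} (hb0 : ∀ i, 0 ≤ b i) (hb : Summable b) :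
    Summable fun p : ι × ι => if p.1 = p.2 then 0 else b p.1 * b p.2 :=
  .of_nonneg_of_le (fun p => by split_ifs <;> simp [mul_nonneg, hb0])
    (fun p => by split_ifs <;> simp [mul_nonneg, hb0]) (hb.mul_of_nonneg hb hb0 hb0)

lemma tsum_offDiag_mul [DecidableEq ι] {b : ι → ℝ} (hb0 : ∀ i, 0 ≤ b i) (hb : Summable b) :
    ∑' p : ι × ι, (if p.1 = p.2 then 0 else b p.1 * b p.2) =
      (∑' i, b i) ^ 2 - ∑' i, b i ^ 2 := by
  have hrow : ∀ i, ∑' j, (if i = j then 0 else b i * b j) = b i * ∑' j, b j - b i ^ 2 := by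
    intro i
    rw [← tsum_mul_left, (hb.mul_left (b i)).tsum_eq_add_tsum_ite i, sq]
    simp_rw [eq_comm (a := i)]
    ring
  rw [(summable_offDiag_mul hb0 hb).tsum_prod, sq (∑' i, b i), ← tsum_mul_right]
  simp_rw [hrow]
  rw [(hb.mul_right _).tsum_sub (hb.sq_of_nonneg hb0)]

lemma neg_mul_log_div_nonneg {a S : ℝ} (ha : 0 ≤ a) (haS : a ≤ S) :
    0 ≤ -(a * Real.log (a / S)) :=
  neg_nonneg.2 <| mul_nonpos_of_nonneg_of_nonpos ha <|
    Real.log_nonpos (div_nonneg ha (ha.trans haS)) (div_le_one_of_le₀ haS (ha.trans haS))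

lemma neg_mul_log_div_le {a S : ℝ} (ha : 0 ≤ a) (haS : a ≤ S) :
    -(a * Real.log (a / S)) ≤ 2 * (√a * √S - a) := by
  rcases ha.eq_or_lt with rfl | ha
  · simp
  have hS : 0 < S := ha.trans_le haS
  have hlog : Real.log (S / a) ≤ 2 * (√(S / a) - 1) := by
    have := Real.log_le_sub_one_of_pos (Real.sqrt_pos.2 (div_pos hS ha))
    rw [Real.log_sqrt (div_pos hS ha).le] at this
    linarith
  have hsqrt : a * √(S / a) = √a * √S := by
    rw [Real.sqrt_div' _ ha.le, mul_div_assoc', mul_div_right_comm, Real.div_sqrt]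
  calc -(a * Real.log (a / S)) = a * Real.log (S / a) := by
        rw [Real.log_div ha.ne' hS.ne', Real.log_div hS.ne' ha.ne']
        ring
    _ ≤ a * (2 * (√(S / a) - 1)) := mul_le_mul_of_nonneg_left hlog ha.le
    _ = 2 * (√a * √S - a) := by rw [← hsqrt]; ring

-- The integrand `p_X(x) H(q_x)` at a point `x`, in terms of the weights `a i = π i φ(x - c i)`.
noncomputable def scaledEntropy (a : ι → ℝ) : ℝ :=
  (∑' i, a i) * -∑' i, a i / (∑' j, a j) * Real.log (a i / ∑' j, a j)

variable {a : ι → ℝ}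

lemma scaledEntropy_eq_tsum (a : ι → ℝ) :
    scaledEntropy a = ∑' i, -(a i * Real.log (a i / ∑' j, a j)) := by
  rw [scaledEntropy, ← tsum_neg, ← tsum_mul_left]
  refine tsum_congr fun i => ?_
  rcases eq_or_ne (∑' j, a j) 0 with hS | hS
  · simp [hS]
  · rw [mul_neg, ← mul_assoc, mul_div_cancel₀ _ hS]

lemma scaledEntropy_nonneg (ha0 : ∀ i, 0 ≤ a i) : 0 ≤ scaledEntropy a := by
  by_cases ha : Summable a
  · rw [scaledEntropy_eq_tsum]
    exact tsum_nonneg fun i => neg_mul_log_div_nonneg (ha0 i) (ha.le_tsum i fun j _ => ha0 j)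
  · simp [scaledEntropy, tsum_eq_zero_of_not_summable ha]

lemma scaledEntropy_le (ha0 : ∀ i, 0 ≤ a i) (hsa : Summable fun i => √(a i)) :
    scaledEntropy a ≤ 2 * ((∑' i, √(a i)) ^ 2 - ∑' i, a i) := by
  have ha : Summable a := .of_sqrt ha0 hsa
  set S := ∑' i, a i
  set T := ∑' i, √(a i)
  have haS : ∀ i, a i ≤ S := fun i => ha.le_tsum i fun j _ => ha0 j
  have hbound : Summable fun i => 2 * (√(a i) * √S - a i) :=
    ((hsa.mul_right _).sub ha).mul_left 2
  have hST : √S ≤ T := by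
    refine Real.sqrt_le_iff.2 ⟨tsum_nonneg fun i => Real.sqrt_nonneg _, ?_⟩
    simpa only [Real.sq_sqrt (ha0 _)] using tsum_sq_le_sq_tsum (fun i => Real.sqrt_nonneg _) hsa
  calc scaledEntropy a = ∑' i, -(a i * Real.log (a i / S)) := scaledEntropy_eq_tsum a
    _ ≤ ∑' i, 2 * (√(a i) * √S - a i) :=
        (Summable.of_nonneg_of_le (fun i => neg_mul_log_div_nonneg (ha0 i) (haS i))
          (fun i => neg_mul_log_div_le (ha0 i) (haS i)) hbound).tsum_le_tsum
          (fun i => neg_mul_log_div_le (ha0 i) (haS i)) hbound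
    _ = 2 * (T * √S - S) := by
        rw [tsum_mul_left, (hsa.mul_right _).tsum_sub ha, tsum_mul_right]
    _ ≤ 2 * (T ^ 2 - S) := by
        gcongr
        rw [sq]
        exact mul_le_mul_of_nonneg_left hST (tsum_nonneg fun i => Real.sqrt_nonneg _)

end Discrete

-- `f` need not be integrable: its Bochner integral is bounded by the lower integral of `‖f‖`.
lemma integral_le_tsum_of_le_tsum {α κ : Type*} [MeasurableSpace α] {μ : Measure α} [Countable κ]
    {f : α → ℝ} {F : κ → α → ℝ} {g : κ → ℝ} (hf0 : ∀ x, 0 ≤ f x)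
    (hfF : ∀ x, f x ≤ ∑' k, F k x) (hF0 : ∀ k x, 0 ≤ F k x)
    (hFs : ∀ x, Summable fun k => F k x) (hFi : ∀ k, Integrable (F k) μ)
    (hFg : ∀ k, ∫ x, F k x ∂μ ≤ g k) (hg : Summable g) :
    ∫ x, f x ∂μ ≤ ∑' k, g k := by
  have hg0 : ∀ k, 0 ≤ g k := fun k => (integral_nonneg (hF0 k)).trans (hFg k)
  have hlin : ∫⁻ x, ENNReal.ofReal ‖f x‖ ∂μ ≤ ENNReal.ofReal (∑' k, g k) :=
    calc ∫⁻ x, ENNReal.ofReal ‖f x‖ ∂μ ≤ ∫⁻ x, ∑' k, ENNReal.ofReal (F k x) ∂μ := by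
          refine lintegral_mono fun x => ?_
          rw [Real.norm_of_nonneg (hf0 x), ← ENNReal.ofReal_tsum_of_nonneg (hF0 · x) (hFs x)]
          exact ENNReal.ofReal_le_ofReal (hfF x)
      _ = ∑' k, ENNReal.ofReal (∫ x, F k x ∂μ) := by
          rw [lintegral_tsum fun k => (hFi k).aemeasurable.ennreal_ofReal]
          exact tsum_congr fun k =>
            (ofReal_integral_eq_lintegral_ofReal (hFi k) (.of_forall (hF0 k))).symm
      _ ≤ ∑' k, ENNReal.ofReal (g k) :=
          ENNReal.tsum_le_tsum fun k => ENNReal.ofReal_le_ofReal (hFg k)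
      _ = ENNReal.ofReal (∑' k, g k) := (ENNReal.ofReal_tsum_of_nonneg hg0 hg).symm
  exact (le_abs_self _).trans <| (norm_integral_le_lintegral_norm f).trans <|
    ENNReal.toReal_le_of_le_ofReal (tsum_nonneg hg0) hlin

lemma sq_le_exp_two_mul_log {T : ℝ} (hT : 0 ≤ T) : T ^ 2 ≤ Real.exp (2 * Real.log T) := by
  rcases hT.eq_or_lt with rfl | hT
  · simp
  · rw [mul_comm, Real.exp_mul, Real.exp_log hT]
    norm_cast

section Channel

variable {m : ℕ} {ι : Type*} [DecidableEq ι] {π : ι → ℝ} {c : ι → EuclideanSpace ℝ (Fin m)}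
  {t : ℝ}

variable (π c t) in
noncomputable def crossTerm (p : ι × ι) (x : EuclideanSpace ℝ (Fin m)) : ℝ :=
  if p.1 = p.2 then 0
  else √(π p.1 * gaussDensity m t (x - c p.1)) * √(π p.2 * gaussDensity m t (x - c p.2))

lemma crossTerm_nonneg (p : ι × ι) (x : EuclideanSpace ℝ (Fin m)) : 0 ≤ crossTerm π c t p x := by
  unfold crossTerm
  split_ifs <;> positivity

lemma summable_crossTerm (hπ0 : ∀ i, 0 ≤ π i) (hπ : Summable fun i => √(π i)) (ht : 0 ≤ t)
    (x : EuclideanSpace ℝ (Fin m)) : Summable fun p => crossTerm π c t p x := by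
  unfold crossTerm
  exact summable_offDiag_mul (b := fun i => √(π i * gaussDensity m t (x - c i)))
    (fun _ => Real.sqrt_nonneg _) (summable_sqrt_mul_gaussDensity_sub hπ0 hπ ht c x)

lemma scaledEntropy_le_two_mul_tsum_crossTerm (hπ0 : ∀ i, 0 ≤ π i)
    (hπ : Summable fun i => √(π i)) (ht : 0 ≤ t) (x : EuclideanSpace ℝ (Fin m)) :
    scaledEntropy (fun i => π i * gaussDensity m t (x - c i)) ≤ 2 * ∑' p, crossTerm π c t p x := by
  have hw0 : ∀ i, 0 ≤ π i * gaussDensity m t (x - c i) :=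
    fun i => mul_nonneg (hπ0 i) (gaussDensity_nonneg ht _)
  have hsw := summable_sqrt_mul_gaussDensity_sub hπ0 hπ ht c x
  refine (scaledEntropy_le hw0 hsw).trans_eq ?_
  unfold crossTerm
  rw [tsum_offDiag_mul (fun i => Real.sqrt_nonneg _) hsw]
  simp_rw [Real.sq_sqrt (hw0 _)]

lemma integrable_crossTerm (hπ0 : ∀ i, 0 ≤ π i) (ht : 0 < t) (p : ι × ι) :
    Integrable (crossTerm π c t p) := by
  unfold crossTerm
  split_ifs
  · exact integrable_zero _ _ _
  · exact integrable_sqrt_mul_gaussDensity_sub_mul (hπ0 _) (hπ0 _) ht _ _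

lemma integral_crossTerm_le {δ : ℝ} (hπ0 : ∀ i, 0 ≤ π i) (ht : 0 < t) (hδ : 0 ≤ δ)
    (hsep : ∀ i j : ι, i ≠ j → δ ≤ ‖c i - c j‖) (p : ι × ι) :
    ∫ x, crossTerm π c t p x ≤ √(π p.1) * √(π p.2) * Real.exp (-δ ^ 2 / (8 * t)) := by
  unfold crossTerm
  split_ifs with hp
  · rw [integral_zero]
    positivity
  · rw [integral_sqrt_mul_gaussDensity_sub_mul (hπ0 _) (hπ0 _) ht]
    gcongr
    exact hsep _ _ hp

end Channel

theorem stmt17_general (m : ℕ) {ι : Type*} [Countable ι]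
    (c : ι → EuclideanSpace ℝ (Fin m))
    (δ : ℝ) (hδ : 0 < δ) (hsep : ∀ i j : ι, i ≠ j → δ ≤ ‖c i - c j‖)
    (π : ι → ℝ) (hπ0 : ∀ i, 0 ≤ π i)
    (hsqrt : Summable fun i => Real.sqrt (π i))
    (Hhalf : ℝ) (hHhalf : Hhalf = 2 * Real.log (∑' i, Real.sqrt (π i)))
    (σ : ℝ) (hσ : 0 < σ)
    (pX : EuclideanSpace ℝ (Fin m) → ℝ)
    (hpX : pX = fun x => ∑' u, π u * gaussDensity m (σ ^ 2) (x - c u))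
    (q : EuclideanSpace ℝ (Fin m) → ι → ℝ)
    (hq : q = fun x i => π i * gaussDensity m (σ ^ 2) (x - c i) / pX x) :
    ∫ x : EuclideanSpace ℝ (Fin m),
        pX x * (-∑' i, q x i * Real.log (q x i))
      ≤ 2 * Real.exp (Hhalf - δ ^ 2 / (8 * σ ^ 2)) := by
  classical
  subst hHhalf hq hpX
  have ht : 0 < σ ^ 2 := by positivity
  have hsqrt0 : ∀ i, 0 ≤ √(π i) := fun _ => Real.sqrt_nonneg _
  calc _ ≤ ∑' p : ι × ι, 2 * (√(π p.1) * √(π p.2) * Real.exp (-δ ^ 2 / (8 * σ ^ 2))) := by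
        refine integral_le_tsum_of_le_tsum
          (f := fun x => scaledEntropy fun i => π i * gaussDensity m (σ ^ 2) (x - c i))
          (F := fun p x => 2 * crossTerm π c (σ ^ 2) p x)
          (fun x => scaledEntropy_nonneg fun i => mul_nonneg (hπ0 i) (gaussDensity_nonneg ht.le _))
          (fun x => ?_) (fun p x => mul_nonneg zero_le_two (crossTerm_nonneg p x))
          (fun x => (summable_crossTerm hπ0 hsqrt ht.le x).mul_left 2)
          (fun p => (integrable_crossTerm hπ0 ht p).const_mul 2) (fun p => ?_)
          (((hsqrt.mul_of_nonneg hsqrt hsqrt0 hsqrt0).mul_right _).mul_left 2)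
        · rw [tsum_mul_left]
          exact scaledEntropy_le_two_mul_tsum_crossTerm hπ0 hsqrt ht.le x
        · rw [integral_const_mul]
          gcongr
          exact integral_crossTerm_le hπ0 ht hδ.le hsep p
    _ = 2 * ((∑' i, √(π i)) ^ 2 * Real.exp (-δ ^ 2 / (8 * σ ^ 2))) := by
        rw [tsum_mul_left, tsum_mul_right, tsum_prod_mul_eq_sq hsqrt0 hsqrt]
    _ ≤ 2 * Real.exp (2 * Real.log (∑' i, √(π i)) - δ ^ 2 / (8 * σ ^ 2)) := by
        rw [sub_eq_add_neg, Real.exp_add, ← neg_div]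
        gcongr
        exact sq_le_exp_two_mul_log (tsum_nonneg hsqrt0)

/-- conditional entropy under δ-separation: for a countable
`δ`-separated codebook `{c i} ⊂ ℝ^m` with pmf `π` of finite order-1/2 Rényi entropy
`H_{1/2}`, observed through the Gaussian channel with noise `N(0, σ² I_m)`, the
conditional Shannon entropy satisfies
`∫ p_X(x) (−Σ_c q_x(c) log q_x(c)) dx ≤ 2 exp(H_{1/2} − δ²/(8σ²))`. -/
theorem stmt17 (m : ℕ) {ι : Type*} [Countable ι]
    (c : ι → EuclideanSpace ℝ (Fin m))
    (δ : ℝ) (hδ : 0 < δ) (hsep : ∀ i j : ι, i ≠ j → δ ≤ ‖c i - c j‖)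
    (π : ι → ℝ) (hπ0 : ∀ i, 0 ≤ π i) (hπ1 : ∑' i, π i = 1)
    (hsqrt : Summable fun i => Real.sqrt (π i))
    (Hhalf : ℝ) (hHhalf : Hhalf = 2 * Real.log (∑' i, Real.sqrt (π i)))
    (σ : ℝ) (hσ : 0 < σ)
    (pX : EuclideanSpace ℝ (Fin m) → ℝ)
    (hpX : pX = fun x => ∑' u, π u * gaussDensity m (σ ^ 2) (x - c u))
    (q : EuclideanSpace ℝ (Fin m) → ι → ℝ)
    (hq : q = fun x i => π i * gaussDensity m (σ ^ 2) (x - c i) / pX x) :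
    ∫ x : EuclideanSpace ℝ (Fin m),
        pX x * (-∑' i, q x i * Real.log (q x i))
      ≤ 2 * Real.exp (Hhalf - δ ^ 2 / (8 * σ ^ 2)) :=
  stmt17_general m c δ hδ hsep π hπ0 hsqrt Hhalf hHhalf σ hσ pX hpX q hq
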